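/- Every symmetric monoidal category V is an n-fold monoidal category for every n, by taking all n tensor products equal to ⊗ and defining every interchange η^{ij}_{ABCD} as the composite α⁻¹ ∘ (1_A⊗α) ∘ (1_A⊗(c_{BC}⊗1_D)) ∘ (1_A⊗α⁻¹) ∘ α; in particular this η satisfies the internal and external unit conditions, both associativity hexagons, and the giant hexagon. -/

import Mathlib

/-!
STATEMENT 10: Every symmetric monoidal category `V` is an `n`-fold monoidal category for
every `n`, by taking all `n` tensor products equal to `⊗` and defining every interchange
`η_{ABCD}` as `α⁻¹ ∘ (1⊗α) ∘ (1⊗(c⊗1)) ∘ (1⊗α⁻¹) ∘ α`.  Since all the products coincide,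
this amounts to: the single morphism `η` satisfies the internal and external unit
conditions (stated with unitors, since the unit of `V` need not be strict), both
associativity hexagons, and the giant hexagon.
-/

open CategoryTheory MonoidalCategory

universe w v

variable (V : Type v) [Category.{w} V] [MonoidalCategory V] [SymmetricCategory V]

/-- The interchange `η_{ABCD} : (A⊗B)⊗(C⊗D) ⟶ (A⊗C)⊗(B⊗D)` built from the symmetry. -/
noncomputable def ηSym (A B C D : V) : (A ⊗ B) ⊗ (C ⊗ D) ⟶ (A ⊗ C) ⊗ (B ⊗ D) :=
  (α_ A B (C ⊗ D)).hom
    ≫ (A ◁ (α_ B C D).inv)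
    ≫ (A ◁ ((β_ B C).hom ▷ D))
    ≫ (A ◁ (α_ C B D).hom)
    ≫ (α_ A C (B ⊗ D)).inv


section Aux

open BraidedCategory CategoryTheory.Functor.LaxMonoidal

/-- The braiding is compatible with `tensorμ` in a symmetric monoidal category. -/
theorem tensorμ_braiding_aux (X₁ X₂ Y₁ Y₂ : V) :
    tensorμ X₁ X₂ Y₁ Y₂ ≫ ((β_ X₁ Y₁).hom ⊗ₘ (β_ X₂ Y₂).hom)
      = (β_ (X₁ ⊗ X₂) (Y₁ ⊗ Y₂)).hom ≫ tensorμ Y₁ Y₂ X₁ X₂ := by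
  simp only [tensorμ, Category.assoc, BraidedCategory.braiding_naturality,
    BraidedCategory.braiding_tensor_right_hom, BraidedCategory.braiding_tensor_left_hom,
    comp_whiskerRight, whisker_assoc, MonoidalCategory.whiskerLeft_comp, pentagon_assoc,
    pentagon_inv_hom_hom_hom_inv_assoc, Iso.inv_hom_id_assoc, whiskerLeft_hom_inv_assoc]
  slice_rhs 11 12 =>
    rw [← MonoidalCategory.whiskerLeft_comp, ← comp_whiskerRight, SymmetricCategory.symmetry]
  rw [MonoidalCategory.tensorHom_def]
  simp only [id_whiskerRight, MonoidalCategory.whiskerLeft_id, Category.id_comp, Category.assoc]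
  monoidal

/-- The tensorator of a braided lax monoidal functor is compatible with `tensorμ`. -/
theorem map_tensorμ_aux {C D : Type*} [Category C] [Category D]
    [MonoidalCategory C] [MonoidalCategory D] [BraidedCategory C] [BraidedCategory D]
    (F : C ⥤ D) [F.LaxMonoidal]
    (hb : ∀ X Y : C, μ F X Y ≫ F.map (β_ X Y).hom = (β_ (F.obj X) (F.obj Y)).hom ≫ μ F Y X)
    (X Y Z W : C) :
    (μ F X Y ⊗ₘ μ F Z W) ≫ μ F (X ⊗ Y) (Z ⊗ W) ≫ F.map (tensorμ X Y Z W)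
      = tensorμ (F.obj X) (F.obj Y) (F.obj Z) (F.obj W)
        ≫ (μ F X Z ⊗ₘ μ F Y W) ≫ μ F (X ⊗ Z) (Y ⊗ W) := by
  have inner : (F.obj Y ◁ μ F Z W) ≫ μ F Y (Z ⊗ W) ≫ F.map (α_ Y Z W).inv
        ≫ F.map ((β_ Y Z).hom ▷ W) ≫ F.map (α_ Z Y W).hom
      = (α_ (F.obj Y) (F.obj Z) (F.obj W)).inv
        ≫ ((β_ (F.obj Y) (F.obj Z)).hom ▷ F.obj W)
        ≫ (α_ (F.obj Z) (F.obj Y) (F.obj W)).hom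
        ≫ (F.obj Z ◁ μ F Y W) ≫ μ F Z (Y ⊗ W) := by
    rw [associativity_inv_assoc]
    slice_lhs 3 4 => rw [← μ_natural_left]
    slice_lhs 2 3 => rw [← comp_whiskerRight, hb, comp_whiskerRight]
    slice_lhs 3 5 => rw [associativity]
  simp only [tensorμ, F.map_comp, Category.assoc, tensorHom_def']
  slice_lhs 2 4 => rw [associativity]
  slice_lhs 4 5 => rw [← μ_natural_right]
  slice_lhs 5 6 => rw [← μ_natural_right]
  slice_lhs 6 7 => rw [← μ_natural_right]
  slice_lhs 1 2 => rw [associator_naturality_right]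
  simp only [← MonoidalCategory.whiskerLeft_comp, Category.assoc]
  rw [inner]
  simp only [MonoidalCategory.whiskerLeft_comp, Category.assoc]
  slice_lhs 6 8 => rw [associativity_inv]
  slice_lhs 5 6 => rw [associator_inv_naturality_right]
  simp only [Category.assoc]

/-- The product of two copies of a braided category is braided, componentwise. -/
noncomputable instance prodBraidedAux : BraidedCategory (V × V) where
  braiding X Y := (β_ X.1 Y.1).prod (β_ X.2 Y.2)

theorem ηSym_eq_tensorμ (A B C D : V) : ηSym V A B C D = tensorμ A B C D := rfl

/-- The giant hexagon for `tensorμ` in a symmetric monoidal category. -/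
theorem giant_hexagon_aux (A A' B B' C C' D D' : V) :
    (tensorμ A A' B B' ⊗ₘ tensorμ C C' D D')
        ≫ tensorμ (A ⊗ B) (A' ⊗ B') (C ⊗ D) (C' ⊗ D')
        ≫ (tensorμ A B C D ⊗ₘ tensorμ A' B' C' D')
      = tensorμ (A ⊗ A') (B ⊗ B') (C ⊗ C') (D ⊗ D')
        ≫ (tensorμ A A' C C' ⊗ₘ tensorμ B B' D D')
        ≫ tensorμ (A ⊗ C) (A' ⊗ C') (B ⊗ D) (B' ⊗ D') := by
  have hb : ∀ X Y : V × V, μ (tensor V) X Y ≫ (tensor V).map (β_ X Y).hom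
      = (β_ ((tensor V).obj X) ((tensor V).obj Y)).hom ≫ μ (tensor V) Y X := by
    intro X Y
    have e : (β_ X Y).hom = ((β_ X.1 Y.1).hom, (β_ X.2 Y.2).hom) := rfl
    simpa [e] using tensorμ_braiding_aux V X.1 X.2 Y.1 Y.2
  have h := map_tensorμ_aux (tensor V) hb ((A,A') : V × V) (B,B') (C,C') (D,D')
  have h2 : tensorμ ((A,A') : V × V) (B,B') (C,C') (D,D') = (tensorμ A B C D, tensorμ A' B' C' D') := rfl
  simpa [h2] using h

end Aux

/-- A symmetric monoidal category is `n`-fold monoidal for all `n`: the interchange built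
from the symmetry satisfies the internal and external unit conditions, the internal and
external associativity hexagons, and the giant hexagon. -/
theorem symmetric_is_n_fold_monoidal :
    -- internal unit conditions
    (∀ A B : V, ηSym V A B (𝟙_ V) (𝟙_ V)
        = ((A ⊗ B) ◁ (λ_ (𝟙_ V)).hom) ≫ (ρ_ (A ⊗ B)).hom ≫ ((ρ_ A).inv ⊗ₘ (ρ_ B).inv)) ∧
    (∀ A B : V, ηSym V (𝟙_ V) (𝟙_ V) A B
        = ((λ_ (𝟙_ V)).hom ▷ (A ⊗ B)) ≫ (λ_ (A ⊗ B)).hom ≫ ((λ_ A).inv ⊗ₘ (λ_ B).inv)) ∧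
    -- external unit conditions
    (∀ A B : V, ηSym V A (𝟙_ V) B (𝟙_ V)
        = ((ρ_ A).hom ⊗ₘ (ρ_ B).hom) ≫ (ρ_ (A ⊗ B)).inv ≫ ((A ⊗ B) ◁ (λ_ (𝟙_ V)).inv)) ∧
    (∀ A B : V, ηSym V (𝟙_ V) A (𝟙_ V) B
        = ((λ_ A).hom ⊗ₘ (λ_ B).hom) ≫ (λ_ (A ⊗ B)).inv ≫ ((λ_ (𝟙_ V)).inv ▷ (A ⊗ B))) ∧
    -- internal associativity hexagon
    (∀ U W X Y Z T : V,
      (ηSym V U W X Y ⊗ₘ 𝟙 (Z ⊗ T)) ≫ ηSym V (U ⊗ X) (W ⊗ Y) Z T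
          ≫ ((α_ U X Z).hom ⊗ₘ (α_ W Y T).hom)
        = (α_ (U ⊗ W) (X ⊗ Y) (Z ⊗ T)).hom ≫ ((U ⊗ W) ◁ ηSym V X Y Z T)
          ≫ ηSym V U W (X ⊗ Z) (Y ⊗ T)) ∧
    -- external associativity hexagon
    (∀ U W X Y Z T : V,
      ηSym V (U ⊗ W) X (Y ⊗ Z) T ≫ (ηSym V U W Y Z ⊗ₘ 𝟙 (X ⊗ T))
          ≫ (α_ (U ⊗ Y) (W ⊗ Z) (X ⊗ T)).hom
        = ((α_ U W X).hom ⊗ₘ (α_ Y Z T).hom) ≫ ηSym V U (W ⊗ X) Y (Z ⊗ T)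
          ≫ ((U ⊗ Y) ◁ ηSym V W X Z T)) ∧
    -- giant hexagon
    (∀ A A' B B' C C' D D' : V,
      (ηSym V A A' B B' ⊗ₘ ηSym V C C' D D')
          ≫ ηSym V (A ⊗ B) (A' ⊗ B') (C ⊗ D) (C' ⊗ D')
          ≫ (ηSym V A B C D ⊗ₘ ηSym V A' B' C' D')
        = ηSym V (A ⊗ A') (B ⊗ B') (C ⊗ C') (D ⊗ D')
          ≫ (ηSym V A A' C C' ⊗ₘ ηSym V B B' D D')
          ≫ ηSym V (A ⊗ C) (A' ⊗ C') (B ⊗ D) (B' ⊗ D')) := by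
  refine ⟨?_, ?_, ?_, ?_, ?_, ?_, ?_⟩
  · intro A B
    rw [ηSym_eq_tensorμ, tensor_right_unitality]
    simp [← MonoidalCategory.whiskerLeft_comp, tensorHom_comp_tensorHom]
  · intro A B
    rw [ηSym_eq_tensorμ, tensor_left_unitality]
    simp [← comp_whiskerRight, tensorHom_comp_tensorHom]
  · intro A B
    rw [ηSym_eq_tensorμ, rightUnitor_monoidal]
    simp [← MonoidalCategory.whiskerLeft_comp]
  · intro A B
    rw [ηSym_eq_tensorμ, leftUnitor_monoidal]
    simp [← comp_whiskerRight]
  · intro U W X Y Z T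
    simpa only [ηSym_eq_tensorμ, tensorHom_id] using tensor_associativity U W X Y Z T
  · intro U W X Y Z T
    simpa only [ηSym_eq_tensorμ, tensorHom_id] using associator_monoidal U W X Y Z T
  · intro A A' B B' C C' D D'
    simpa only [ηSym_eq_tensorμ] using giant_hexagon_aux V A A' B B' C C' D D'
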